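/- (Criterion for ε-proper efficiency.) Let X ⊆ ℝ^n be nonempty, f : ℝ^n → ℝ^m with components f_1,…,f_m, K = ℝ^m_+, and ε ∈ ℝ^m_+. For x̄ ∈ X the following are equivalent: (i) x̄ is an ε-properly efficient solution; (ii) cl cone[f(X) + ℝ^m_+ − (f(x̄) − ε)] ∩ (−ℝ^m_+) = {0}; (iii) cl cone[f(X) − (f(x̄) − ε)] ∩ (−ℝ^m_+) = {0}. -/

import Mathlib

/-!
Write `A = f(X) - (f(xbar) - ε)`. Proper efficiency says exactly that every loss `-a i` of a
point `a ∈ A` is paid for by a gain `a j` at rate at most `M`. Up to a factor `m`, this is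
membership of `A` in the closed cone `{z | ∀ i, -z i ≤ M * ∑ j, max (z j) 0}`, which is stable
under adding `ℝ^m_+` and meets `-ℝ^m_+` only in `0`; this gives (i) ⇒ (ii), and (ii) ⇒ (iii) is
monotonicity. Conversely, under (iii) the function `z ↦ ∑ j, max (z j) 0` is positive on the
compact set `cl cone A ∩ {‖z‖ = 1}`, so it has a positive minimum `δ`, and `M = 1/δ` bounds the
trade-offs of the normalized points `a / ‖a‖`.
-/

open Set Pointwise

/-- The smallest cone containing `D`: `cone D = {t • d : t ≥ 0, d ∈ D}`. -/
def coneGen {E : Type*} [AddCommGroup E] [Module ℝ E] (D : Set E) : Set E :=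
  {x | ∃ t : ℝ, 0 ≤ t ∧ ∃ d ∈ D, x = t • d}

/-- The nonnegative orthant `ℝ^m_+`. -/
def orthant (m : ℕ) : Set (Fin m → ℝ) := {x | ∀ i, 0 ≤ x i}

/-- `xbar` is an ε-efficient solution of the problem `min_K f(x) s.t. x ∈ X`, with the
ordering cone `K = ℝ^m_+`: `xbar ∈ X` and there is no `y ∈ X` with
`f(y) ≤ f(xbar) - ε` and `f(y) ≠ f(xbar) - ε`. -/
def IsEpsEff {n m : ℕ} (X : Set (Fin n → ℝ)) (f : (Fin n → ℝ) → (Fin m → ℝ))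
    (ε : Fin m → ℝ) (xbar : Fin n → ℝ) : Prop :=
  xbar ∈ X ∧ ¬ ∃ y ∈ X, f xbar - ε - f y ∈ orthant m ∧ f y ≠ f xbar - ε

/-- `xbar` is an ε-properly efficient solution (in the sense of Li and Wang / Liu, a
Geoffrion-type notion) of the problem `min f(x) s.t. x ∈ X` with ordering cone `ℝ^m_+`. -/
def IsEpsProperEff {n m : ℕ} (X : Set (Fin n → ℝ)) (f : (Fin n → ℝ) → (Fin m → ℝ))
    (ε : Fin m → ℝ) (xbar : Fin n → ℝ) : Prop :=
  IsEpsEff X f ε xbar ∧ ∃ M : ℝ, 0 < M ∧ ∀ i : Fin m, ∀ x ∈ X,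
    f x i < f xbar i - ε i → ∃ j : Fin m, f xbar j - ε j < f x j ∧
      (f xbar i - f x i - ε i) / (f x j - f xbar j + ε j) ≤ M

section ConeGen

variable {E : Type*} [AddCommGroup E] [Module ℝ E]

lemma zero_mem_coneGen {D : Set E} (hD : D.Nonempty) : 0 ∈ coneGen D := by
  obtain ⟨d, hd⟩ := hD
  exact ⟨0, le_rfl, d, hd, (zero_smul ℝ d).symm⟩

lemma coneGen_mono {C D : Set E} (h : C ⊆ D) : coneGen C ⊆ coneGen D := by
  rintro x ⟨t, ht, d, hd, rfl⟩
  exact ⟨t, ht, d, h hd, rfl⟩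

lemma coneGen_subset {C D : Set E} (hDC : D ⊆ C) (hC : ∀ t : ℝ, 0 ≤ t → ∀ z ∈ C, t • z ∈ C) :
    coneGen D ⊆ C := by
  rintro x ⟨t, ht, d, hd, rfl⟩
  exact hC t ht d (hDC hd)

end ConeGen

section TradeoffCone

variable {m : ℕ}

lemma inter_neg_orthant_eq_zero_iff {C : Set (Fin m → ℝ)} (hC : 0 ∈ C) :
    C ∩ -orthant m = {0} ↔ C ∩ -orthant m ⊆ {0} :=
  ⟨fun h => h.subset, fun h => h.antisymm <| singleton_subset_iff.2 ⟨hC, fun i => by simp⟩⟩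

def posPartSum (z : Fin m → ℝ) : ℝ := ∑ j, max (z j) 0

lemma posPartSum_nonneg (z : Fin m → ℝ) : 0 ≤ posPartSum z :=
  Finset.sum_nonneg fun _ _ => le_max_right _ _

lemma le_posPartSum (z : Fin m → ℝ) (j : Fin m) : z j ≤ posPartSum z :=
  (le_max_left _ _).trans <|
    Finset.single_le_sum (f := fun j => max (z j) 0) (fun _ _ => le_max_right _ _)
      (Finset.mem_univ j)

lemma posPartSum_smul {t : ℝ} (ht : 0 ≤ t) (z : Fin m → ℝ) :
    posPartSum (t • z) = t * posPartSum z := by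
  simp only [posPartSum, Finset.mul_sum, Pi.smul_apply, smul_eq_mul, mul_max_of_nonneg _ _ ht,
    mul_zero]

lemma posPartSum_mono {z w : Fin m → ℝ} (h : z ≤ w) : posPartSum z ≤ posPartSum w :=
  Finset.sum_le_sum fun j _ => max_le_max (h j) le_rfl

lemma posPartSum_eq_zero_of_mem_neg_orthant {z : Fin m → ℝ} (hz : z ∈ -orthant m) :
    posPartSum z = 0 :=
  Finset.sum_eq_zero fun j _ => max_eq_right (by simpa using hz j)

lemma continuous_posPartSum : Continuous (posPartSum (m := m)) :=
  continuous_finsetSum _ fun j _ => (continuous_apply j).max continuous_const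

def tradeoffCone (m : ℕ) (M : ℝ) : Set (Fin m → ℝ) := {z | ∀ i, -z i ≤ M * posPartSum z}

variable {M : ℝ}

lemma isClosed_tradeoffCone : IsClosed (tradeoffCone m M) := by
  simp only [tradeoffCone, ofPred_forall]
  exact isClosed_iInter fun i =>
    isClosed_le (continuous_apply i).neg (continuous_const.mul continuous_posPartSum)

lemma smul_mem_tradeoffCone {t : ℝ} (ht : 0 ≤ t) {z : Fin m → ℝ} (hz : z ∈ tradeoffCone m M) :
    t • z ∈ tradeoffCone m M := fun i => by
  rw [posPartSum_smul ht]
  simpa [mul_left_comm] using mul_le_mul_of_nonneg_left (hz i) ht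

lemma add_orthant_subset_tradeoffCone (hM : 0 ≤ M) :
    tradeoffCone m M + orthant m ⊆ tradeoffCone m M := by
  rintro _ ⟨z, hz, u, hu, rfl⟩ i
  have hzu : z ≤ z + u := fun j => le_add_of_nonneg_right (hu j)
  calc -(z + u) i ≤ -z i := by simpa using hu i
    _ ≤ M * posPartSum z := hz i
    _ ≤ M * posPartSum (z + u) := mul_le_mul_of_nonneg_left (posPartSum_mono hzu) hM

lemma tradeoffCone_inter_neg_orthant : tradeoffCone m M ∩ -orthant m ⊆ {0} := by
  rintro z ⟨hz, hneg⟩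
  funext i
  have := hz i
  rw [posPartSum_eq_zero_of_mem_neg_orthant hneg, mul_zero] at this
  exact le_antisymm (by simpa using hneg i) (by simpa using this)

lemma closure_coneGen_add_orthant_subset {A : Set (Fin m → ℝ)} (hM : 0 ≤ M)
    (hA : A ⊆ tradeoffCone m M) : closure (coneGen (A + orthant m)) ⊆ tradeoffCone m M :=
  closure_minimal
    (coneGen_subset ((add_subset_add_right hA).trans (add_orthant_subset_tradeoffCone hM))
      fun _ ht _ hz => smul_mem_tradeoffCone ht hz)
    isClosed_tradeoffCone

/-- Geoffrion's bound from `IsEpsProperEff`, read on the shifted outcomes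
`a = f x - (f xbar - ε)`: a loss `-a i > 0` comes with a gain `a j > 0` at rate at most `M`. -/
def HasBoundedTradeoffs (A : Set (Fin m → ℝ)) (M : ℝ) : Prop :=
  ∀ a ∈ A, ∀ i, a i < 0 → ∃ j, 0 < a j ∧ -a i ≤ M * a j

lemma HasBoundedTradeoffs.eq_zero_of_mem_neg_orthant {A : Set (Fin m → ℝ)}
    (h : HasBoundedTradeoffs A M) {a : Fin m → ℝ} (ha : a ∈ A) (hneg : a ∈ -orthant m) :
    a = 0 := by
  have hle : ∀ j, a j ≤ 0 := fun j => by simpa using hneg j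
  funext i
  refine le_antisymm (hle i) (not_lt.1 fun hi => ?_)
  obtain ⟨j, hj, -⟩ := h a ha i hi
  exact (hle j).not_gt hj

lemma HasBoundedTradeoffs.subset_tradeoffCone {A : Set (Fin m → ℝ)}
    (h : HasBoundedTradeoffs A M) (hM : 0 ≤ M) : A ⊆ tradeoffCone m M := by
  intro a ha i
  rcases lt_or_ge (a i) 0 with hi | hi
  · obtain ⟨j, -, hj⟩ := h a ha i hi
    exact hj.trans (mul_le_mul_of_nonneg_left (le_posPartSum a j) hM)
  · exact (neg_nonpos.2 hi).trans (mul_nonneg hM (posPartSum_nonneg a))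

lemma hasBoundedTradeoffs_of_subset_tradeoffCone {A : Set (Fin m → ℝ)} (hM : 0 ≤ M)
    (hA : A ⊆ tradeoffCone m M) : HasBoundedTradeoffs A (M * m) := by
  intro a ha i hi
  obtain ⟨j, -, hj⟩ := Finset.exists_max_image Finset.univ a ⟨i, Finset.mem_univ i⟩
  have hsum : posPartSum a ≤ m * max (a j) 0 := by
    simpa [posPartSum] using Finset.sum_le_card_nsmul Finset.univ (fun k => max (a k) 0)
      (max (a j) 0) fun k hk => max_le_max (hj k hk) le_rfl
  have hloss : -a i ≤ M * (m * max (a j) 0) :=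
    (hA ha i).trans (mul_le_mul_of_nonneg_left hsum hM)
  have hj_pos : 0 < a j := by
    by_contra! hj_nonpos
    rw [max_eq_right hj_nonpos, mul_zero, mul_zero] at hloss
    linarith
  rw [max_eq_left hj_pos.le, ← mul_assoc] at hloss
  exact ⟨j, hj_pos, hloss⟩

lemma HasBoundedTradeoffs.mono {A : Set (Fin m → ℝ)} {N : ℝ} (h : HasBoundedTradeoffs A M)
    (hMN : M ≤ N) : HasBoundedTradeoffs A N := fun a ha i hi => by
  obtain ⟨j, hj, hle⟩ := h a ha i hi
  exact ⟨j, hj, hle.trans (mul_le_mul_of_nonneg_right hMN hj.le)⟩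

lemma exists_subset_tradeoffCone {A : Set (Fin m → ℝ)}
    (hA : closure (coneGen A) ∩ -orthant m ⊆ {0}) : ∃ M > 0, A ⊆ tradeoffCone m M := by
  set T := closure (coneGen A) ∩ Metric.sphere 0 1
  have hT : IsCompact T := (isCompact_sphere 0 1).inter_left isClosed_closure
  have hpos : ∀ z ∈ T, 0 < posPartSum z := by
    rintro z ⟨hzC, hz1⟩
    by_contra! hle
    have hneg : z ∈ -orthant m := fun j => by simpa using (le_posPartSum z j).trans hle
    have hz0 : z = 0 := hA ⟨hzC, hneg⟩
    simp [hz0] at hz1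
  obtain ⟨δ, hδ, hδT⟩ := hT.exists_forall_le' continuous_posPartSum.continuousOn hpos
  refine ⟨δ⁻¹, inv_pos.2 hδ, fun a ha => ?_⟩
  rcases eq_or_ne a 0 with rfl | ha0
  · intro i
    simp [posPartSum]
  have hc : ‖a‖⁻¹ • a ∈ T :=
    ⟨subset_closure ⟨‖a‖⁻¹, by positivity, a, ha, rfl⟩, by simp [norm_smul, ha0]⟩
  have hcM : ‖a‖⁻¹ • a ∈ tradeoffCone m δ⁻¹ := fun i => calc
    -(‖a‖⁻¹ • a) i ≤ ‖‖a‖⁻¹ • a‖ := (neg_le_abs _).trans (Real.norm_eq_abs _ ▸ norm_le_pi_norm _ i)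
    _ = 1 := mem_sphere_zero_iff_norm.1 hc.2
    _ ≤ δ⁻¹ * posPartSum (‖a‖⁻¹ • a) := by
      rw [← div_eq_inv_mul, one_le_div hδ]
      exact hδT _ hc
  simpa [smul_smul, ha0] using smul_mem_tradeoffCone (norm_nonneg a) hcM

lemma HasBoundedTradeoffs.closure_coneGen_add_orthant_inter_subset {A : Set (Fin m → ℝ)}
    (h : HasBoundedTradeoffs A M) (hM : 0 ≤ M) :
    closure (coneGen (A + orthant m)) ∩ -orthant m ⊆ {0} :=
  (inter_subset_inter_left _
    (closure_coneGen_add_orthant_subset hM (h.subset_tradeoffCone hM))).trans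
    tradeoffCone_inter_neg_orthant

lemma exists_hasBoundedTradeoffs {A : Set (Fin m → ℝ)}
    (hA : closure (coneGen A) ∩ -orthant m ⊆ {0}) : ∃ M > 0, HasBoundedTradeoffs A M := by
  obtain ⟨M, hM, hAM⟩ := exists_subset_tradeoffCone hA
  exact ⟨max (M * m) 1, by positivity,
    (hasBoundedTradeoffs_of_subset_tradeoffCone hM.le hAM).mono (le_max_left _ _)⟩

end TradeoffCone

lemma isEpsProperEff_iff_hasBoundedTradeoffs {n m : ℕ} {X : Set (Fin n → ℝ)}
    {f : (Fin n → ℝ) → (Fin m → ℝ)} {ε : Fin m → ℝ} {xbar : Fin n → ℝ} (hxbar : xbar ∈ X) :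
    IsEpsProperEff X f ε xbar ↔
      ∃ M > 0, HasBoundedTradeoffs ((fun x => f x - (f xbar - ε)) '' X) M := by
  constructor
  · rintro ⟨-, M, hM, h⟩
    refine ⟨M, hM, ?_⟩
    rintro _ ⟨x, hx, rfl⟩ i hi
    obtain ⟨j, hj, hratio⟩ := h i x hx (by simp only [Pi.sub_apply] at hi; linarith)
    rw [div_le_iff₀ (by linarith)] at hratio
    refine ⟨j, ?_, ?_⟩ <;> simp only [Pi.sub_apply] <;> linarith
  · rintro ⟨M, hM, h⟩
    refine ⟨⟨hxbar, ?_⟩, M, hM, fun i x hx hi => ?_⟩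
    · rintro ⟨y, hy, hle, hne⟩
      refine hne (sub_eq_zero.1 (h.eq_zero_of_mem_neg_orthant ⟨y, hy, rfl⟩ fun j => ?_))
      simpa using hle j
    · obtain ⟨j, hj, hle⟩ := h _ ⟨x, hx, rfl⟩ i (by simp only [Pi.sub_apply]; linarith)
      simp only [Pi.sub_apply] at hj hle
      refine ⟨j, by linarith, ?_⟩
      rw [div_le_iff₀ (by linarith)]
      linarith

theorem stmt_5_general {n m : ℕ} (X : Set (Fin n → ℝ))
    (f : (Fin n → ℝ) → (Fin m → ℝ))
    (ε : Fin m → ℝ)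
    (xbar : Fin n → ℝ) (hxbar : xbar ∈ X) :
    (IsEpsProperEff X f ε xbar ↔
      closure (coneGen (((fun x => f x - (f xbar - ε)) '' X) + orthant m)) ∩ (-(orthant m))
        = {0}) ∧
    (IsEpsProperEff X f ε xbar ↔
      closure (coneGen ((fun x => f x - (f xbar - ε)) '' X)) ∩ (-(orthant m)) = {0}) := by
  set A := (fun x => f x - (f xbar - ε)) '' X
  have hA : A.Nonempty := ⟨_, xbar, hxbar, rfl⟩
  have h0 : (0 : Fin m → ℝ) ∈ orthant m := fun _ => le_rfl
  rw [isEpsProperEff_iff_hasBoundedTradeoffs hxbar,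
    inter_neg_orthant_eq_zero_iff (subset_closure (zero_mem_coneGen (hA.add ⟨0, h0⟩))),
    inter_neg_orthant_eq_zero_iff (subset_closure (zero_mem_coneGen hA))]
  have i_ii : (∃ M > 0, HasBoundedTradeoffs A M) →
      closure (coneGen (A + orthant m)) ∩ -orthant m ⊆ {0} := fun ⟨M, hM, h⟩ =>
    h.closure_coneGen_add_orthant_inter_subset hM.le
  have ii_iii : closure (coneGen (A + orthant m)) ∩ -orthant m ⊆ {0} →
      closure (coneGen A) ∩ -orthant m ⊆ {0} :=
    (inter_subset_inter_left _ (closure_mono (coneGen_mono (subset_add_left A h0)))).trans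
  exact ⟨⟨i_ii, exists_hasBoundedTradeoffs ∘ ii_iii⟩,
    ⟨ii_iii ∘ i_ii, exists_hasBoundedTradeoffs⟩⟩

/-- Criterion for ε-proper efficiency: for `xbar ∈ X`, the following are equivalent:
(i) `xbar` is ε-properly efficient; (ii) `cl cone [f(X) + ℝ^m_+ - (f(xbar) - ε)] ∩ (-ℝ^m_+) = {0}`;
(iii) `cl cone [f(X) - (f(xbar) - ε)] ∩ (-ℝ^m_+) = {0}`. -/
theorem stmt_5 {n m : ℕ} (X : Set (Fin n → ℝ)) (hX : X.Nonempty)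
    (f : (Fin n → ℝ) → (Fin m → ℝ))
    (ε : Fin m → ℝ) (hε : ∀ i, 0 ≤ ε i)
    (xbar : Fin n → ℝ) (hxbar : xbar ∈ X) :
    (IsEpsProperEff X f ε xbar ↔
      closure (coneGen (((fun x => f x - (f xbar - ε)) '' X) + orthant m)) ∩ (-(orthant m))
        = {0}) ∧
    (IsEpsProperEff X f ε xbar ↔
      closure (coneGen ((fun x => f x - (f xbar - ε)) '' X)) ∩ (-(orthant m)) = {0}) :=
  stmt_5_general X f ε xbar hxbar
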